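/- arXiv:1904.09193 — 4 statements merged into one kernel-verified Lean document; each statement's English description precedes it below -/
import Mathlib

section
/- Suppose that for all sets A and B, whenever A is nonempty and there is an injective function f : A → B, there is a surjective function g : B → A. Then the principle of excluded middle holds (for every proposition p, p ∨ ¬p). -/
/-- If every injection from a nonempty set can be reversed into a surjection,
then excluded middle holds. -/
theorem injsur_implies_em
    (H : ∀ (A B : Type), Nonempty A → (∃ f : A → B, Function.Injective f) →
      ∃ g : B → A, Function.Surjective g) :
    ∀ p : Prop, p ∨ ¬p := by
  intro p
  obtain ⟨g, hg⟩ := H {x : Bool // x = true ∨ p} Bool ⟨⟨true, Or.inl rfl⟩⟩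
    ⟨Subtype.val, Subtype.val_injective⟩
  rcases h0 : (g false).val with _ | _
  · exact Or.inl ((g false).property.resolve_left (by simp [h0]))
  · rcases h1 : (g true).val with _ | _
    · exact Or.inl ((g true).property.resolve_left (by simp [h1]))
    · right
      intro hp
      obtain ⟨b, hb⟩ := hg ⟨false, Or.inr hp⟩
      cases b
      · rw [hb] at h0; simp at h0
      · rw [hb] at h1; simp at h1
end

section
/- If CBBB holds (for all sets A, B and injections f : A → B, g : B → A there is a bijection h : A → B such that for all x ∈ A, f(x) = h(x) or x = g(h(x))), then the principle of excluded middle holds (for every proposition p, p ∨ ¬p). -/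
/-- The Banaschewski–Brümmer strengthening of Cantor–Bernstein implies
excluded middle. -/
theorem cbbb_implies_em
    (CBBB : ∀ (A B : Type) (f : A → B) (g : B → A),
      Function.Injective f → Function.Injective g →
      ∃ h : A → B, Function.Bijective h ∧ ∀ x : A, f x = h x ∨ x = g (h x)) :
    ∀ p : Prop, p ∨ ¬p := by
  intro p
  set B := ℕ ⊕ PLift p with hB
  have fInj : Function.Injective (Sum.inl : ℕ → B) := Sum.inl_injective
  set g : B → ℕ := fun b => match b with
    | Sum.inl n => n + 1
    | Sum.inr _ => 0 with hg
  have gInj : Function.Injective g := by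
    intro a b hab
    cases a with
    | inl n =>
      cases b with
      | inl m => simp [hg] at hab; simp [hab]
      | inr hp => simp [hg] at hab
    | inr hp =>
      cases b with
      | inl m => simp [hg] at hab
      | inr hq => cases hp; cases hq; rfl
  obtain ⟨h, ⟨hinj, hsurj⟩, hcond⟩ := CBBB ℕ B Sum.inl g fInj gInj
  rcases hcond 0 with h0 | h0
  · -- h 0 = inl 0, show all h n = inl n, hence ¬p
    have hall : ∀ n, h n = Sum.inl n := by
      intro n
      induction n with
      | zero => exact h0.symm
      | succ n ih =>
        rcases hcond (n + 1) with hc | hc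
        · exact hc.symm
        · rcases hh : h (n + 1) with m | hp
          · rw [hh] at hc
            simp only [hg] at hc
            have hm : m = n := by omega
            subst hm
            exfalso
            have := hinj (hh.trans ih.symm)
            omega
          · rw [hh] at hc
            simp [hg] at hc
        
    right
    intro hp
    obtain ⟨n, hn⟩ := hsurj (Sum.inr ⟨hp⟩)
    rw [hall n] at hn
    exact Sum.inl_ne_inr hn
  · -- 0 = g (h 0): h 0 must be inr, so p
    rcases hh : h 0 with m | hp
    · rw [hh] at h0; simp [hg] at h0
    · exact Or.inl hp.down
end

section
/- Let Q : N∞ → Bool. If Q(ω) = true and Q(n̄) = true for every natural number n, then Q(p) = true for every p ∈ N∞. -/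
/-- `N∞`: the one-point compactification of `ℕ`, as the subtype of
non-increasing boolean sequences. -/
def NInfty : Type :=
  {p : ℕ → Bool // ∀ n, p n = true → ∀ m, m < n → p m = true}

/-- The embedding `n ↦ n̄` of `ℕ` into `N∞`: `n̄ m = true` iff `m < n`. -/
def natBar (n : ℕ) : NInfty :=
  ⟨fun m => decide (m < n), by
    intro a ha b hb
    simp only [decide_eq_true_eq] at *
    omega⟩

/-- `ω`: the constant `true` sequence. -/
def omegaInf : NInfty := ⟨fun _ => true, fun _ _ _ _ => rfl⟩

/-- The successor function on `N∞`. -/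
def NInfty.Succ (p : NInfty) : NInfty :=
  ⟨fun n => match n with
    | 0 => true
    | Nat.succ k => p.1 k, by
    intro n h m hm
    cases m with
    | zero => rfl
    | succ m =>
      cases n with
      | zero => omega
      | succ n => exact p.2 n h m (by omega)⟩

/-- Density: a decidable predicate on N∞ holding at ω and at every n̄ holds
everywhere. -/
theorem ninfty_density (Q : NInfty → Bool)
    (homega : Q omegaInf = true) (hfin : ∀ n : ℕ, Q (natBar n) = true) :
    ∀ p : NInfty, Q p = true := by
  intro p
  by_cases h : ∀ n, p.1 n = true
  · have : p = omegaInf := by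
      apply Subtype.ext; funext n; exact h n
    rw [this]; exact homega
  · push_neg at h
    obtain ⟨n, hn⟩ := h
    have hex : ∃ n, p.1 n = false := ⟨n, by
      cases hp : p.1 n with
      | false => rfl
      | true => exact absurd hp hn⟩
    let k := Nat.find hex
    have hk : p.1 k = false := Nat.find_spec hex
    have hlt : ∀ m < k, p.1 m = true := fun m hm => by
      have := Nat.find_min hex hm
      cases hpm : p.1 m with
      | false => exact absurd hpm this
      | true => rfl
    have : p = natBar k := by
      apply Subtype.ext; funext m
      show p.1 m = decide (m < k)
      by_cases hmk : m < k
      · simp [hmk, hlt m hmk]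
      · simp only [hmk, decide_eq_false_iff_not.mpr hmk]
        cases hpm : p.1 m with
        | false => rfl
        | true =>
          exfalso
          have : k < m ∨ k = m := by omega
          rcases this with h1 | h1
          · have := p.2 m hpm k h1
            rw [hk] at this; exact Bool.false_ne_true this
          · rw [h1] at hk; rw [hk] at hpm; exact Bool.false_ne_true hpm
    rw [this]; exact hfin k
end

section
/- If excluded middle holds, then CBBB holds: for all sets A and B and injections f : A → B and g : B → A, there exists a bijection h : A → B such that for every x ∈ A, either f(x) = h(x) or x = g(h(x)). -/
open Set Function

/-- CBBB holds (using excluded middle, available in the ambient classical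
logic): given injections `f : A → B` and `g : B → A`, there is a bijection
`h : A → B` such that for every `x`, `f x = h x` or `x = g (h x)`. -/
theorem cbbb_of_em (A B : Type) (f : A → B) (g : B → A)
    (hf : Function.Injective f) (hg : Function.Injective g) :
    ∃ h : A → B, Function.Bijective h ∧ ∀ x : A, f x = h x ∨ x = g (h x) := by
  classical
  cases' isEmpty_or_nonempty B with hβ hβ
  · have : IsEmpty A := Function.isEmpty f
    exact ⟨fun x => isEmptyElim x,
      ((Equiv.equivEmpty A).trans (Equiv.equivEmpty B).symm).bijective,
      fun x => isEmptyElim x⟩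
  set F : Set A →o Set A :=
    { toFun := fun s => (g '' (f '' s)ᶜ)ᶜ
      monotone' := fun s t hst =>
        compl_subset_compl.mpr <| image_mono <| compl_subset_compl.mpr <| image_mono hst }
  set s : Set A := F.lfp
  have hs : (g '' (f '' s)ᶜ)ᶜ = s := F.map_lfp
  have hns : g '' (f '' s)ᶜ = sᶜ := compl_injective (by simp [hs])
  set g' := invFun g
  have g'g : LeftInverse g' g := leftInverse_invFun hg
  have hg'ns : g' '' sᶜ = (f '' s)ᶜ := by rw [← hns, g'g.image_image]
  set h : A → B := s.piecewise f g' with hh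
  have hsurj : Surjective h := by rw [← range_eq_univ, range_piecewise, hg'ns, union_compl_self]
  have hinj : Injective h := by
    refine (injective_piecewise_iff _).2 ⟨hf.injOn, ?_, ?_⟩
    · intro x hx y hy hxy
      obtain ⟨x', _, rfl⟩ : x ∈ g '' (f '' s)ᶜ := by rwa [hns]
      obtain ⟨y', _, rfl⟩ : y ∈ g '' (f '' s)ᶜ := by rwa [hns]
      rw [g'g _, g'g _] at hxy
      rw [hxy]
    · intro x hx y hy hxy
      obtain ⟨y', hy', rfl⟩ : y ∈ g '' (f '' s)ᶜ := by rwa [hns]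
      rw [g'g _] at hxy
      exact hy' ⟨x, hx, hxy⟩
  refine ⟨h, ⟨hinj, hsurj⟩, fun x => ?_⟩
  by_cases hx : x ∈ s
  · left; rw [hh, Set.piecewise_eq_of_mem _ _ _ hx]
  · right
    obtain ⟨x', _, rfl⟩ : x ∈ g '' (f '' s)ᶜ := by rwa [hns]
    rw [hh, Set.piecewise_eq_of_notMem _ _ _ hx, g'g _]
end
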